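/- arXiv:1410.5152 — 6 statements merged into one kernel-verified Lean document; each statement's English description precedes it below -/
import Mathlib

section
/- Fix V and a preference aggregation function F. If the fixed point rule C_F satisfies Group Stability or Anonymity, then every election (V,F,S) with 1 < |S| < |V| satisfies Non-Dictatorship (i.e., there is no voter s ∈ S such that F(Π_S) = π_s for all profiles Π_S). -/
/-- A preference (linear order) on `V`, given as a ranking bijection; `u ≻_π v` iff `π u < π v`. -/
abbrev Pref (V : Type*) [Fintype V] : Type _ := V ≃ Fin (Fintype.card V)

variable {V : Type*} [Fintype V] [DecidableEq V]

/-- `S` is a community of `(V, P)` with respect to the aggregation function `F`. -/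
def CommF (F : (S : Finset V) → (↥S → Pref V) → V → ℕ)
    (P : V → Pref V) (S : Finset V) : Prop :=
  S.Nonempty ∧ ∀ u ∈ S, ∀ v ∉ S, F S (fun s => P s.1) u < F S (fun s => P s.1) v

/-- Group stability of a subset `S` with respect to a profile `P`: no nonempty proper
subgroup `G ⊊ S` can be replaced by an equal-size `G' ⊆ V − S` such that every remaining
member `s ∈ S − G` lexicographically prefers `G'` over `G` via a bijection `f_s`. -/
def GroupStable (P : V → Pref V) (S : Finset V) : Prop :=
  ∀ G : Finset V, G ⊂ S → G.Nonempty → ∀ G' : Finset V, (∀ x ∈ G', x ∉ S) →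
    G'.card = G.card →
    ∀ f : ↥(S \ G) → ↥G → ↥G', (∀ s, Function.Bijective (f s)) →
      ∃ s : ↥(S \ G), ∃ u : ↥G, P s.1 u.1 < P s.1 (f s u).1

/-- Anonymity of the fixed point rule `C_F`: relabeling members by a permutation `σ`
(acting on the indexing of the preferences and on the candidates) maps communities
to communities. -/
def AnonF (F : (S : Finset V) → (↥S → Pref V) → V → ℕ) : Prop :=
  ∀ (P : V → Pref V) (σ : Equiv.Perm V) (S : Finset V),
    CommF F P S ↔ CommF F (fun s => ((σ.symm : V ≃ V).trans (P (σ.symm s)))) (S.image σ)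

/-! A dictator `s` makes `S` a community of every profile in which `s` ranks `S` first. Pick
another member `t ∈ S` and an outsider `w`. Under Group Stability, let every member other than
`s` rank `w` above `s`: then all of `S \ {s}` prefer replacing `{s}` by `{w}`. Under Anonymity,
let only `t` rank `w` above `t`: the swap of `s` and `t` fixes `S` but hands `t`'s ranking to
the dictator, so `S` stops being a community. -/

theorem exists_pref_lt_of_mem_of_notMem (S : Finset V) :
    ∃ e : Pref V, ∀ u ∈ S, ∀ v ∉ S, e u < e v := by
  have hcard : Fintype.card {x // x ∈ S} + Fintype.card {x // x ∉ S} = Fintype.card V := by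
    rw [← Fintype.card_sum]; exact Fintype.card_congr (Equiv.sumCompl (· ∈ S))
  refine ⟨((Equiv.sumCompl (· ∈ S)).symm.trans
      ((Fintype.equivFin _).sumCongr (Fintype.equivFin _))).trans
      (finSumFinEquiv.trans (finCongr hcard)), fun u hu v hv => ?_⟩
  simp only [Equiv.trans_apply, Equiv.sumCompl_symm_apply_of_pos (p := (· ∈ S)) hu,
    Equiv.sumCompl_symm_apply_of_neg (p := (· ∈ S)) hv, Equiv.sumCongr_apply, Sum.map_inl,
    Sum.map_inr, finSumFinEquiv_apply_left, finSumFinEquiv_apply_right, finCongr_apply,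
    Fin.lt_def, Fin.val_cast, Fin.val_castAdd, Fin.val_natAdd]
  exact (Fin.is_lt _).trans_le (Nat.le_add_right _ _)

theorem exists_pref_lt {a b : V} (hab : a ≠ b) : ∃ e : Pref V, e a < e b := by
  obtain ⟨e, he⟩ := exists_pref_lt_of_mem_of_notMem {a}
  exact ⟨e, he a (Finset.mem_singleton_self a) b (by simpa using hab.symm)⟩

theorem not_groupStable_of_forall_lt {P : V → Pref V} {S : Finset V} {s t w : V}
    (hs : s ∈ S) (ht : t ∈ S) (hts : t ≠ s) (hw : w ∉ S)
    (hP : ∀ r ∈ S, r ≠ s → P r w < P r s) : ¬ GroupStable P S := by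
  intro hstable
  have hsS : {s} ⊂ S := Finset.ssubset_iff_of_subset (Finset.singleton_subset_iff.mpr hs)
    |>.mpr ⟨t, ht, by simpa using hts⟩
  obtain ⟨⟨r, hr⟩, ⟨u, hu⟩, hlt⟩ := hstable {s} hsS (Finset.singleton_nonempty s) {w}
    (by simpa using hw) (by simp) (fun _ => Equiv.ofUnique _ _) fun _ => Equiv.bijective _
  rw [Finset.mem_sdiff, Finset.mem_singleton] at hr
  obtain rfl := Finset.mem_singleton.mp hu
  exact (hP r hr.1 hr.2).not_gt hlt

def IsDictator (F : (S : Finset V) → (↥S → Pref V) → V → ℕ) (S : Finset V) (s : ↥S) : Prop :=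
  ∀ PS : ↥S → Pref V, ∀ u v : V, F S PS u < F S PS v ↔ PS s u < PS s v

namespace IsDictator

variable {F : (S : Finset V) → (↥S → Pref V) → V → ℕ} {S : Finset V} {s : ↥S}

omit [DecidableEq V] in
theorem commF (hs : IsDictator F S s) {P : V → Pref V}
    (hP : ∀ u ∈ S, ∀ v ∉ S, P s u < P s v) : CommF F P S :=
  ⟨⟨s, s.2⟩, fun u hu v hv => (hs _ u v).mpr (hP u hu v hv)⟩

theorem exists_commF_not_groupStable (hs : IsDictator F S s) {t w : V} (ht : t ∈ S)
    (hts : t ≠ s) (hw : w ∉ S) : ∃ P : V → Pref V, CommF F P S ∧ ¬ GroupStable P S := by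
  obtain ⟨eS, heS⟩ := exists_pref_lt_of_mem_of_notMem S
  obtain ⟨ews, hews⟩ := exists_pref_lt (show w ≠ s from fun h => hw (h ▸ s.2))
  refine ⟨Function.update (fun _ => ews) s eS, hs.commF ?_,
    not_groupStable_of_forall_lt s.2 ht hts hw fun r _ hr => ?_⟩
  · simpa using heS
  · simpa [Function.update_of_ne hr] using hews

theorem not_anonF (hs : IsDictator F S s) {t w : V} (ht : t ∈ S)
    (hts : t ≠ s) (hw : w ∉ S) : ¬ AnonF F := by
  intro hanon
  have hws : w ≠ s := fun h => hw (h ▸ s.2)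
  have hwt : w ≠ t := fun h => hw (h ▸ ht)
  obtain ⟨eS, heS⟩ := exists_pref_lt_of_mem_of_notMem S
  obtain ⟨ewt, hewt⟩ := exists_pref_lt hwt
  set P : V → Pref V := Function.update (fun _ => eS) t ewt
  have hcomm : CommF F P S := hs.commF (by simpa [P, Function.update_of_ne hts.symm] using heS)
  have hswap : S.image (Equiv.swap (s : V) t) = S :=
    (Finset.map_eq_image _ S).symm.trans <| Finset.map_perm fun x hx => by
      obtain ⟨-, rfl | rfl⟩ := Equiv.swap_apply_ne_self_iff.mp hx
      exacts [s.2, ht]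
  have hswap_comm := (hanon P (Equiv.swap (s : V) t) S).mp hcomm
  rw [hswap] at hswap_comm
  have hlt := (hs _ s w).mp (hswap_comm.2 s s.2 w hw)
  simp only [Equiv.symm_swap, Equiv.trans_apply, Equiv.swap_apply_left, Function.update_self, P,
    Equiv.swap_apply_of_ne_of_ne hws hwt] at hlt
  exact hewt.not_gt hlt

end IsDictator

/-- if the fixed point rule `C_F` satisfies Group Stability or Anonymity, then
every election `(V, F, S)` with `1 < |S| < |V|` satisfies Non-Dictatorship: there is no voter
`s ∈ S` such that for every profile `P_S`, the aggregate `F(P_S)` coincides (as an ordering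
of `V`) with `π_s`. -/
theorem stmt_4 (F : (S : Finset V) → (↥S → Pref V) → V → ℕ)
    (h : (∀ (P : V → Pref V) (S : Finset V), CommF F P S → GroupStable P S) ∨ AnonF F)
    (S : Finset V) (h1 : 1 < S.card) (h2 : S.card < Fintype.card V) :
    ¬ ∃ s : ↥S, ∀ PS : ↥S → Pref V, ∀ u v : V,
        (F S PS u < F S PS v ↔ PS s u < PS s v) := by
  rintro ⟨s, hs⟩
  obtain ⟨t, ht, hts⟩ := Finset.exists_mem_ne h1 s
  obtain ⟨w, -, hw⟩ := Finset.exists_mem_notMem_of_card_lt_card (t := Finset.univ) h2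
  rcases h with hstable | hanon
  · obtain ⟨P, hcomm, hnot⟩ := IsDictator.exists_commF_not_groupStable hs ht hts hw
    exact hnot (hstable P S hcomm)
  · exact IsDictator.not_anonF hs ht hts hw hanon
end

section
/- If a community rule satisfies the Group Stability and Self-Approval axioms then it satisfies Pareto Efficiency: for any community S and any u ∈ S, v ∉ S, there exists s ∈ S with u ≻_{π_s} v. -/
variable {V : Type*} [Fintype V] [DecidableEq V]

/-- Self-approval of `S` w.r.t. profile `P`: for every `G' ⊆ V − S` with `|G'| = |S|` and
every family of bijections `(f_s : S → G')_{s ∈ S}`, some `s, u ∈ S` satisfy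
`u ≻_{π_s} f_s(u)`. -/
def SelfApprove (P : V → Pref V) (S : Finset V) : Prop :=
  ∀ G' : Finset V, (∀ x ∈ G', x ∉ S) → G'.card = S.card →
    ∀ f : ↥S → ↥S → ↥G', (∀ s, Function.Bijective (f s)) →
      ∃ s u : ↥S, P s.1 u.1 < P s.1 (f s u).1

open Finset

theorem GroupStable.exists_lt {P : V → Pref V} {S : Finset V} (h : GroupStable P S) {u v : V}
    (hu : {u} ⊂ S) (hv : v ∉ S) : ∃ s ∈ S, P s u < P s v := by
  obtain ⟨s, w, hlt⟩ := h {u} hu (singleton_nonempty u) {v} (by simpa using hv) rfl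
    (fun _ _ => default) (fun _ => Unique.bijective)
  exact ⟨s, (mem_sdiff.1 s.2).1, by simpa [mem_singleton.1 w.2] using hlt⟩

theorem SelfApprove.lt_of_singleton {α : Type*} [Fintype α] {P : α → Pref α} {u v : α}
    (h : SelfApprove P {u}) (hv : v ≠ u) : P u u < P u v := by
  obtain ⟨s, w, hlt⟩ := h {v} (by simpa using hv) rfl (fun _ _ => default)
    (fun _ => Unique.bijective)
  simpa [mem_singleton.1 s.2, mem_singleton.1 w.2] using hlt

/-- a community rule satisfying the Group Stability and Self-Approval axioms
satisfies Pareto Efficiency: for every community `S`, all `u ∈ S` and `v ∉ S`, some member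
`s ∈ S` prefers `u` over `v`. -/
theorem stmt_8 (C : (V → Pref V) → Finset V → Prop)
    (hGS : ∀ (P : V → Pref V) (S : Finset V), C P S → GroupStable P S)
    (hSA : ∀ (P : V → Pref V) (S : Finset V), C P S → SelfApprove P S) :
    ∀ (P : V → Pref V) (S : Finset V), C P S →
      ∀ u ∈ S, ∀ v ∉ S, ∃ s ∈ S, P s u < P s v := by
  intro P S hC u hu v hv
  rcases (singleton_subset_iff.2 hu).ssubset_or_eq with hsub | rfl
  · exact (hGS P S hC).exists_lt hsub hv
  · exact ⟨u, mem_singleton_self u, (hSA P {u} hC).lt_of_singleton (by simpa using hv)⟩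
end

section
/- The harmonious community rule satisfies Weak Group Stability: if S is a harmonious community of (V,Π), then for all G ⊆ S and G' ⊆ V−S with 0 < |G| = |G'| ≤ |S|/2 and every bijection f : G → G', there exist s ∈ S−G and u ∈ G with u ≻_{π_s} f(u). -/
/-- `S` is a harmonious community of `(V, P)`: for all `u ∈ S`, `v ∉ S`, a strict majority
of the preferences `{π_s : s ∈ S}` prefer `u` over `v`. -/
def Harm {V : Type*} [Fintype V] [DecidableEq V]
    (P : V → Pref V) (S : Finset V) : Prop :=
  ∀ u ∈ S, ∀ v ∉ S, S.card < 2 * (S.filter fun s => P s u < P s v).card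

theorem Harm.exists_notMem_lt_of_two_mul_card_le {V : Type*} [Fintype V] [DecidableEq V]
    {P : V → Pref V} {S : Finset V} (hS : Harm P S) {u v : V} (hu : u ∈ S) (hv : v ∉ S)
    {T : Finset V} (hT : 2 * T.card ≤ S.card) : ∃ s ∈ S, s ∉ T ∧ P s u < P s v := by
  by_contra! h
  have hsub : (S.filter fun s => P s u < P s v) ⊆ T := fun s hs => by
    rw [Finset.mem_filter] at hs
    by_contra hsT
    exact (h s hs.1 hsT).not_gt hs.2
  have := (hS u hu v hv).trans_le (Nat.mul_le_mul_left 2 (Finset.card_le_card hsub))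
  omega

/-- the harmonious rule satisfies Weak Group Stability: if `S` is a
harmonious community of `(V, P)`, then for all `G ⊆ S` and `G' ⊆ V − S` with
`0 < |G| = |G'| ≤ |S| / 2` and every (global) bijection `f : G → G'`, there exist
`s ∈ S − G` and `u ∈ G` with `u ≻_{π_s} f(u)`. -/
theorem stmt_14 {V : Type*} [Fintype V] [DecidableEq V]
    (P : V → Pref V) (S : Finset V) (hS : Harm P S) :
    ∀ G : Finset V, G ⊆ S → G.Nonempty → ∀ G' : Finset V, (∀ x ∈ G', x ∉ S) →
      G'.card = G.card → 2 * G.card ≤ S.card →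
      ∀ f : ↥G → ↥G', Function.Bijective f →
        ∃ s ∈ S, s ∉ G ∧ ∃ u : ↥G, P s u.1 < P s (f u).1 := by
  intro G hGS ⟨x, hx⟩ G' hG' _ hhalf f _
  obtain ⟨s, hs, hsG, hlt⟩ :=
    hS.exists_notMem_lt_of_two_mul_card_le (hGS hx) (hG' _ (f ⟨x, hx⟩).2) hhalf
  exact ⟨s, hs, hsG, ⟨x, hx⟩, hlt⟩
end

section
/- For the Clique Rule, if S₁ and S₂ are both communities of a preference network A, then S₁ ∩ S₂ = ∅, or S₁ ⊆ S₂, or S₂ ⊆ S₁. -/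
/-- `S` is a community for the Clique Rule: `S` is nonempty and every member of `S` ranks
every member of `S` above every non-member. -/
def CliqueComm {V : Type*} [Fintype V] [DecidableEq V]
    (P : V → Pref V) (S : Finset V) : Prop :=
  S.Nonempty ∧ ∀ s ∈ S, ∀ u ∈ S, ∀ v ∉ S, P s u < P s v

/-- A common member `s` of two communities would otherwise rank some `a ∈ S₁ \ S₂` both
above and below some `b ∈ S₂ \ S₁`. -/
theorem CliqueComm.subset_of_not_subset {V : Type*} [Fintype V] [DecidableEq V]
    {P : V → Pref V} {S₁ S₂ : Finset V} {s : V}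
    (h₁ : CliqueComm P S₁) (h₂ : CliqueComm P S₂) (hs : s ∈ S₁ ∩ S₂) (h₁₂ : ¬S₁ ⊆ S₂) :
    S₂ ⊆ S₁ := by
  obtain ⟨a, ha₁, ha₂⟩ := Finset.not_subset.mp h₁₂
  rw [Finset.mem_inter] at hs
  intro b hb₂
  by_contra hb₁
  exact lt_asymm (h₁.2 s hs.1 a ha₁ b hb₁) (h₂.2 s hs.2 b hb₂ a ha₂)

/-- two communities of the Clique Rule are either disjoint or nested. -/
theorem stmt_15 {V : Type*} [Fintype V] [DecidableEq V]
    (P : V → Pref V) (S₁ S₂ : Finset V)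
    (h₁ : CliqueComm P S₁) (h₂ : CliqueComm P S₂) :
    S₁ ∩ S₂ = ∅ ∨ S₁ ⊆ S₂ ∨ S₂ ⊆ S₁ := by
  rcases (S₁ ∩ S₂).eq_empty_or_nonempty with hdisj | ⟨s, hs⟩
  · exact Or.inl hdisj
  · exact Or.inr (or_iff_not_imp_left.mpr (h₁.subset_of_not_subset h₂ hs))
end

section
/- If S is a δ-strong B3CT community of (V,Π), then S is an (α, α−δ)-B3CT community for α = min_{u∈S} φ_S(u)/|S|; that is, letting β = max_{v∈V−S} φ_S(v)/|S|, one has α − β > δ. -/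
/-- `φ_{T,k}(i)`: the number of members of `T` ranking `i` among their top `k` choices
(0-indexed ranks). -/
def phiT {V : Type*} [Fintype V] [DecidableEq V]
    (P : V → Pref V) (T : Finset V) (k : ℕ) (i : V) : ℕ :=
  (T.filter fun s => ((P s i : Fin (Fintype.card V)) : ℕ) < k).card

/-! Let `u ∈ S` attain `α` and `v ∉ S` attain `β`, and suppose `φ_S(u) - φ_S(v) ≤ δ|S|`.
Deleting from `S` exactly `φ_S(u) - φ_S(v)` voters who rank `u`, but not `v`, among their top
`|S|` leaves a coalition `T` of size at least `(1 - δ)|S|` in which `u` and `v` are ranked equally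
often, contradicting `δ`-strength. -/

section Removal

variable {V : Type*} [Fintype V] [DecidableEq V] (P : V → Pref V) {T D : Finset V} {k : ℕ}

lemma phiT_sdiff_of_forall_mem_lt {i : V} (hDT : D ⊆ T) (hD : ∀ s ∈ D, (P s i : ℕ) < k) :
    phiT P (T \ D) k i = phiT P T k i - D.card := by
  have hfilter : (T \ D).filter (fun s => (P s i : ℕ) < k)
      = T.filter (fun s => (P s i : ℕ) < k) \ D := by
    ext s
    simp only [Finset.mem_filter, Finset.mem_sdiff]
    tauto
  have hDsub : D ⊆ T.filter (fun s => (P s i : ℕ) < k) := fun s hs =>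
    Finset.mem_filter.mpr ⟨hDT hs, hD s hs⟩
  rw [phiT, hfilter, Finset.card_sdiff_of_subset hDsub, phiT]

lemma phiT_sdiff_of_forall_mem_le {j : V} (hD : ∀ s ∈ D, k ≤ (P s j : ℕ)) :
    phiT P (T \ D) k j = phiT P T k j := by
  unfold phiT
  congr 1
  ext s
  simp only [Finset.mem_filter, Finset.mem_sdiff]
  exact ⟨fun h => ⟨h.1.1, h.2⟩,
    fun h => ⟨⟨h.1, fun hs => (hD s hs).not_gt h.2⟩, h.2⟩⟩

lemma exists_subset_phiT_sdiff_eq {i j : V} (hji : phiT P T k j ≤ phiT P T k i) :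
    ∃ D ⊆ T, D.card = phiT P T k i - phiT P T k j ∧
      phiT P (T \ D) k i = phiT P (T \ D) k j := by
  set A := T.filter (fun s => (P s i : ℕ) < k)
  set B := T.filter (fun s => (P s j : ℕ) < k)
  obtain ⟨D, hDAB, hDcard⟩ := Finset.exists_subset_card_eq (Finset.le_card_sdiff B A)
  have hDA : D ⊆ A := hDAB.trans Finset.sdiff_subset
  have hDT : D ⊆ T := hDA.trans (Finset.filter_subset _ _)
  have hi : ∀ s ∈ D, (P s i : ℕ) < k := fun s hs => (Finset.mem_filter.mp (hDA hs)).2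
  have hj : ∀ s ∈ D, k ≤ (P s j : ℕ) := fun s hs => by
    have hsB : s ∉ B := (Finset.mem_sdiff.mp (hDAB hs)).2
    simp only [B, Finset.mem_filter, not_and, not_lt] at hsB
    exact hsB (hDT hs)
  refine ⟨D, hDT, hDcard, ?_⟩
  rw [phiT_sdiff_of_forall_mem_lt P hDT hi, phiT_sdiff_of_forall_mem_le P hj, hDcard]
  change A.card - (A.card - B.card) = B.card
  change B.card ≤ A.card at hji
  omega

end Removal

lemma mul_card_lt_phiT_sub_phiT_of_strong {V : Type*} [Fintype V] [DecidableEq V]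
    {P : V → Pref V} {S : Finset V} {δ : ℝ} (hδ0 : 0 ≤ δ)
    (hstrong : ∀ T ⊆ S, (1 - δ) * (S.card : ℝ) ≤ (T.card : ℝ) →
      ∀ u ∈ S, ∀ v ∉ S, phiT P T S.card v < phiT P T S.card u)
    {u v : V} (hu : u ∈ S) (hv : v ∉ S) :
    δ * S.card < (phiT P S S.card u : ℝ) - phiT P S S.card v := by
  by_contra! hgap
  have hvu : phiT P S S.card v < phiT P S S.card u :=
    hstrong S subset_rfl (by nlinarith [S.card.cast_nonneg (α := ℝ)]) u hu v hv
  obtain ⟨D, hDS, hDcard, hequal⟩ := exists_subset_phiT_sdiff_eq P hvu.le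
  have hcard : (1 - δ) * (S.card : ℝ) ≤ ((S \ D).card : ℝ) := by
    have huS : phiT P S S.card u ≤ S.card := Finset.card_filter_le _ _
    rw [Finset.card_sdiff_of_subset hDS, hDcard, Nat.cast_sub (by omega),
      Nat.cast_sub hvu.le]
    linarith
  exact (hstrong (S \ D) Finset.sdiff_subset hcard u hu v hv).ne' hequal

theorem stmt_18_general {V : Type*} [Fintype V] [DecidableEq V]
    (P : V → Pref V) (S : Finset V) (hSne : S.Nonempty) (hcne : Sᶜ.Nonempty)
    (δ : ℝ) (hδ0 : 0 ≤ δ)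
    (hstrong : ∀ T ⊆ S, (1 - δ) * (S.card : ℝ) ≤ (T.card : ℝ) →
      ∀ u ∈ S, ∀ v ∉ S, phiT P T S.card v < phiT P T S.card u) :
    δ < (((S.image (phiT P S S.card)).min' (hSne.image _) : ℝ)) / (S.card : ℝ)
        - (((Sᶜ.image (phiT P S S.card)).max' (hcne.image _) : ℝ)) / (S.card : ℝ) := by
  obtain ⟨u, hu, hmin⟩ :=
    Finset.mem_image.mp ((S.image (phiT P S S.card)).min'_mem (hSne.image _))
  obtain ⟨v, hv, hmax⟩ :=
    Finset.mem_image.mp ((Sᶜ.image (phiT P S S.card)).max'_mem (hcne.image _))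
  have hcard : (0 : ℝ) < S.card := by exact_mod_cast hSne.card_pos
  rw [← hmin, ← hmax, div_sub_div_same, lt_div_iff₀ hcard]
  exact mul_card_lt_phiT_sub_phiT_of_strong hδ0 hstrong hu (Finset.mem_compl.mp hv)

/-- if `S` is a `δ`-strong B3CT community of `(V, P)` (i.e. for every
`T ⊆ S` with `|T| ≥ (1−δ)|S|` and all `u ∈ S`, `v ∉ S`, `φ_{T,|S|}(u) > φ_{T,|S|}(v)`),
then with `α = min_{u∈S} φ_S(u) / |S|` and `β = max_{v∉S} φ_S(v) / |S|` one has
`α − β > δ`, i.e. `S` is an `(α, α−δ)`-B3CT community. -/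
theorem stmt_18 {V : Type*} [Fintype V] [DecidableEq V]
    (P : V → Pref V) (S : Finset V) (hSne : S.Nonempty) (hcne : Sᶜ.Nonempty)
    (δ : ℝ) (hδ0 : 0 ≤ δ) (hδ1 : δ ≤ 1)
    (hstrong : ∀ T ⊆ S, (1 - δ) * (S.card : ℝ) ≤ (T.card : ℝ) →
      ∀ u ∈ S, ∀ v ∉ S, phiT P T S.card v < phiT P T S.card u) :
    δ < (((S.image (phiT P S S.card)).min' (hSne.image _) : ℝ)) / (S.card : ℝ)
        - (((Sᶜ.image (phiT P S S.card)).max' (hcne.image _) : ℝ)) / (S.card : ℝ) :=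
  stmt_18_general P S hSne hcne δ hδ0 hstrong
end

section
/- If S is a δ-strong harmonious community of (V,Π), then S is a (δ/2)-stable harmonious community; that is, for all u ∈ S and v ∈ V−S, at least a (1/2 + δ/2)-fraction of the orders {π_s : s ∈ S} prefer u over v. -/
/-!
If fewer than a `(1/2 + δ/2)`-fraction of `S` prefer `u` to `v`, the set `B` of members
preferring `v` has `2|B| > (1 - δ)|S|`. Enlarging `B` inside `S` to any size `m` with `|B| ≤ m ≤ 2|B|`
and `m ≥ (1 - δ)|S|` gives an admissible `T` in which `u` has no strict majority.
-/

open Finset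

namespace Finset

variable {α : Type*} {S : Finset α} {p : α → Prop} [DecidablePred p]

lemma exists_subset_card_eq_two_mul_card_filter_le {m : ℕ}
    (hbm : #(S.filter fun s => ¬p s) ≤ m) (hmS : m ≤ #S)
    (hm2b : m ≤ 2 * #(S.filter fun s => ¬p s)) :
    ∃ T ⊆ S, #T = m ∧ 2 * #(T.filter p) ≤ m := by
  obtain ⟨T, hBT, hTS, hTm⟩ := exists_subsuperset_card_eq (filter_subset _ S) hbm hmS
  have hB : #(S.filter fun s => ¬p s) ≤ #(T.filter fun s => ¬p s) :=
    card_le_card fun s hs => mem_filter.2 ⟨hBT hs, (mem_filter.1 hs).2⟩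
  have hsplit := card_filter_add_card_filter_not (s := T) p
  exact ⟨T, hTS, hTm, by omega⟩

lemma two_mul_card_filter_not_le_of_forall_majority {c : ℝ} (hcS : c ≤ #S)
    (hmaj : ∀ T ⊆ S, c ≤ #T → (#T : ℝ) < 2 * #(T.filter p)) :
    (2 * #(S.filter fun s => ¬p s) : ℝ) ≤ c := by
  set b := #(S.filter fun s => ¬p s)
  by_contra! hcb
  have hceil : ⌈c⌉₊ ≤ 2 * b := Nat.ceil_le.2 (by exact_mod_cast hcb.le)
  obtain ⟨T, hTS, hTm, hTp⟩ := exists_subset_card_eq_two_mul_card_filter_le (p := p)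
    (le_max_left b ⌈c⌉₊)
    (max_le (card_le_card (filter_subset _ S)) (Nat.ceil_le.2 hcS))
    (max_le (by omega) hceil)
  have hcT : c ≤ #T := hTm ▸ (Nat.le_ceil c).trans (by exact_mod_cast le_max_right b ⌈c⌉₊)
  have := hmaj T hTS hcT
  rw [hTm] at this
  exact absurd (by exact_mod_cast this) (not_lt.2 hTp)

end Finset

theorem stmt_19_general {V : Type*} [Fintype V] [DecidableEq V]
    (P : V → Pref V) (S : Finset V)
    (δ : ℝ) (hδ0 : 0 ≤ δ)
    (hstrong : ∀ T ⊆ S, (1 - δ) * (S.card : ℝ) ≤ (T.card : ℝ) →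
      ∀ u ∈ S, ∀ v ∉ S,
        (T.card : ℝ) < 2 * ((T.filter fun s => P s u < P s v).card : ℝ)) :
    ∀ u ∈ S, ∀ v ∉ S,
      (1 / 2 + δ / 2) * (S.card : ℝ) ≤ ((S.filter fun s => P s u < P s v).card : ℝ) := by
  intro u hu v hv
  have hcS : (1 - δ) * (#S : ℝ) ≤ #S := by nlinarith [(#S).cast_nonneg (α := ℝ)]
  have hminority := two_mul_card_filter_not_le_of_forall_majority hcS
    fun T hTS hcT => hstrong T hTS hcT u hu v hv
  have hsplit : (#(S.filter fun s => P s u < P s v) : ℝ) + #(S.filter fun s => ¬P s u < P s v)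
      = #S := by exact_mod_cast card_filter_add_card_filter_not _
  linarith

/-- if `S` is a `δ`-strong harmonious community of `(V, P)` (for every
`T ⊆ S` with `|T| ≥ (1−δ)|S|` and all `u ∈ S`, `v ∉ S`, a strict majority of
`{π_s : s ∈ T}` prefer `u` over `v`), then `S` is a `(δ/2)`-stable harmonious community:
for all `u ∈ S`, `v ∉ S`, at least a `(1/2 + δ/2)`-fraction of the orders
`{π_s : s ∈ S}` prefer `u` over `v`. -/
theorem stmt_19 {V : Type*} [Fintype V] [DecidableEq V]
    (P : V → Pref V) (S : Finset V)
    (δ : ℝ) (hδ0 : 0 ≤ δ) (hδ1 : δ ≤ 1)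
    (hstrong : ∀ T ⊆ S, (1 - δ) * (S.card : ℝ) ≤ (T.card : ℝ) →
      ∀ u ∈ S, ∀ v ∉ S,
        (T.card : ℝ) < 2 * ((T.filter fun s => P s u < P s v).card : ℝ)) :
    ∀ u ∈ S, ∀ v ∉ S,
      (1 / 2 + δ / 2) * (S.card : ℝ) ≤ ((S.filter fun s => P s u < P s v).card : ℝ) :=
  stmt_19_general P S δ hδ0 hstrong
end
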